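/- arXiv:1304.6371 — 4 statements merged into one kernel-verified Lean document; each statement's English description precedes it below -/
import Mathlib

section
/- Let (R, ⊕, ·) be a semihyperring. If λ and μ are fuzzy hyperideals of R, then their product λμ is a fuzzy hyperideal of R. -/
/-- The unit interval `[0,1]` is a complete lattice. -/
noncomputable instance : Fact ((0:ℝ) ≤ 1) := ⟨zero_le_one⟩

/-- A semihyperring `(R, ⊕, ·)`: a hyperoperation `hadd` (with nonempty values),
a binary multiplication `mul`, and an element `zero`, satisfying commutativity and
(extended) associativity of `⊕`, associativity of `·`, two-sided distributivity of
`·` over `⊕` (as sets), and `0 ⊕ x = {x}`, `0·x = 0 = x·0`. -/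
class Semihyperring (R : Type*) where
  hadd : R → R → Set R
  mul : R → R → R
  zero : R
  hadd_nonempty : ∀ x y : R, (hadd x y).Nonempty
  hadd_comm : ∀ x y : R, hadd x y = hadd y x
  hadd_assoc : ∀ x y z : R, (⋃ w ∈ hadd y z, hadd x w) = ⋃ w ∈ hadd x y, hadd w z
  mul_assoc : ∀ x y z : R, mul (mul x y) z = mul x (mul y z)
  left_distrib : ∀ x y z : R, (fun w => mul x w) '' hadd y z = hadd (mul x y) (mul x z)
  right_distrib : ∀ x y z : R, (fun w => mul w z) '' hadd x y = hadd (mul x z) (mul y z)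
  zero_hadd : ∀ x : R, hadd zero x = {x}
  hadd_zero : ∀ x : R, hadd x zero = {x}
  zero_mul : ∀ x : R, mul zero x = zero
  mul_zero : ∀ x : R, mul x zero = zero

namespace Semihyperring

variable {R : Type*} [Semihyperring R]

/-- The hyperoperation `⊕` extended to subsets: `A ⊕ B = ⋃ {a ⊕ b : a ∈ A, b ∈ B}`. -/
def haddSet (A B : Set R) : Set R := ⋃ a ∈ A, ⋃ b ∈ B, hadd a b

/-- The hypersum `x₁ ⊕ x₂ ⊕ ⋯ ⊕ xₚ` of a list of elements (the empty hypersum is `{0}`,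
which is neutral since `0 ⊕ x = {x}`). -/
def hsumList : List R → Set R
  | [] => {zero}
  | x :: xs => haddSet {x} (hsumList xs)

/-- A (two-sided) hyperideal: a nonempty subset closed under `⊕` and under
multiplication by arbitrary elements of `R` on both sides. -/
def IsHyperideal (I : Set R) : Prop :=
  I.Nonempty ∧ (∀ x ∈ I, ∀ y ∈ I, hadd x y ⊆ I) ∧
    (∀ r : R, ∀ x ∈ I, mul r x ∈ I ∧ mul x r ∈ I)

/-- A right hyperideal. -/
def IsRightHyperideal (I : Set R) : Prop :=
  I.Nonempty ∧ (∀ x ∈ I, ∀ y ∈ I, hadd x y ⊆ I) ∧ (∀ x ∈ I, ∀ r : R, mul x r ∈ I)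

/-- A left hyperideal. -/
def IsLeftHyperideal (I : Set R) : Prop :=
  I.Nonempty ∧ (∀ x ∈ I, ∀ y ∈ I, hadd x y ⊆ I) ∧ (∀ x ∈ I, ∀ r : R, mul r x ∈ I)

/-- The product of two subsets:
`AB = {x : x ∈ a₁b₁ ⊕ ⋯ ⊕ aₚbₚ for some p ≥ 1, aᵢ ∈ A, bᵢ ∈ B}`. -/
def setProd (A B : Set R) : Set R :=
  {x | ∃ l : List (R × R), l ≠ [] ∧ (∀ p ∈ l, p.1 ∈ A ∧ p.2 ∈ B) ∧
    x ∈ hsumList (l.map fun p => mul p.1 p.2)}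

/-- `R` is fully idempotent if every hyperideal `I` satisfies `I² = I`. -/
def FullyIdempotent (R : Type*) [Semihyperring R] : Prop :=
  ∀ I : Set R, IsHyperideal I → setProd I I = I

/-- `R` is (von Neumann) regular if every `x` satisfies `x = x·a·x` for some `a`. -/
def Regular (R : Type*) [Semihyperring R] : Prop :=
  ∀ x : R, ∃ a : R, x = mul (mul x a) x

/-- A fuzzy hyperideal of `R`: a function `μ : R → [0,1]` with
`inf {μ z : z ∈ x ⊕ y} ≥ min (μ x) (μ y)` and `μ (x·y) ≥ max (μ x) (μ y)`. -/
def IsFuzzyHyperideal (μ : R → unitInterval) : Prop :=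
  (∀ x y : R, μ x ⊓ μ y ≤ ⨅ z ∈ hadd x y, μ z) ∧
  (∀ x y : R, μ x ⊔ μ y ≤ μ (mul x y))

/-- A fuzzy right hyperideal: `inf {λ z : z ∈ x ⊕ y} ≥ min (λ x) (λ y)` and `λ (x·y) ≥ λ x`. -/
def IsFuzzyRightHyperideal (μ : R → unitInterval) : Prop :=
  (∀ x y : R, μ x ⊓ μ y ≤ ⨅ z ∈ hadd x y, μ z) ∧
  (∀ x y : R, μ x ≤ μ (mul x y))

/-- A fuzzy left hyperideal: `inf {λ z : z ∈ x ⊕ y} ≥ min (λ x) (λ y)` and `λ (x·y) ≥ λ y`. -/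
def IsFuzzyLeftHyperideal (μ : R → unitInterval) : Prop :=
  (∀ x y : R, μ x ⊓ μ y ≤ ⨅ z ∈ hadd x y, μ z) ∧
  (∀ x y : R, μ y ≤ μ (mul x y))

/-- The product `λμ` of fuzzy subsets:
`(λμ)(x) = ⋁ { ⋀_{1≤i≤p} (λ yᵢ ⊓ μ zᵢ) : p ≥ 1, x ∈ y₁z₁ ⊕ ⋯ ⊕ yₚzₚ }`. -/
noncomputable def fprod (lam mu : R → unitInterval) (x : R) : unitInterval :=
  sSup {t | ∃ l : List (R × R), l ≠ [] ∧
    x ∈ hsumList (l.map fun p => mul p.1 p.2) ∧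
    t = ⨅ p ∈ l, lam p.1 ⊓ mu p.2}

/-- The sum `λ ⊕ μ` of fuzzy subsets:
`(λ ⊕ μ)(x) = ⋁ { λ y ⊓ μ z : x ∈ y ⊕ z }`. -/
noncomputable def fsum (lam mu : R → unitInterval) (x : R) : unitInterval :=
  sSup {t | ∃ y z : R, x ∈ hadd y z ∧ t = lam y ⊓ mu z}

/-- The composition `λ ∘ μ` of fuzzy subsets:
`(λ ∘ μ)(x) = ⋁ { λ y ⊓ μ z : x = y·z }` (with `⋁ ∅ = 0`). -/
noncomputable def fcomp (lam mu : R → unitInterval) (x : R) : unitInterval :=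
  sSup {t | ∃ y z : R, x = mul y z ∧ t = lam y ⊓ mu z}

/-- A fuzzy prime hyperideal: a fuzzy hyperideal `η` such that for all fuzzy hyperideals
`λ, μ`, `λμ ≤ η` implies `λ ≤ η` or `μ ≤ η`. -/
def IsFuzzyPrimeHyperideal (η : R → unitInterval) : Prop :=
  IsFuzzyHyperideal η ∧ ∀ lam mu : R → unitInterval, IsFuzzyHyperideal lam →
    IsFuzzyHyperideal mu → fprod lam mu ≤ η → lam ≤ η ∨ mu ≤ η

/-- A fuzzy irreducible hyperideal: a fuzzy hyperideal `η` such that for all fuzzy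
hyperideals `λ, μ`, `min (λ, μ) = η` (pointwise) implies `λ = η` or `μ = η`. -/
def IsFuzzyIrreducibleHyperideal (η : R → unitInterval) : Prop :=
  IsFuzzyHyperideal η ∧ ∀ lam mu : R → unitInterval, IsFuzzyHyperideal lam →
    IsFuzzyHyperideal mu → lam ⊓ mu = η → lam = η ∨ mu = η

/-- `FP R`: the set of proper fuzzy prime hyperideals of `R`
(`η` is proper if it is not the constant function `1`). -/
def FP (R : Type*) [Semihyperring R] : Set (R → unitInterval) :=
  {η | IsFuzzyPrimeHyperideal η ∧ η ≠ fun _ => 1}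

/-- `O λ = {μ ∈ FP R : λ ≰ μ}`. -/
def O (lam : R → unitInterval) : Set (R → unitInterval) :=
  {mu ∈ FP R | ¬ lam ≤ mu}

/-- The sum `Σᵢ ηᵢ` of an arbitrary family of fuzzy subsets:
`(Σᵢ ηᵢ)(x) = ⋁ { ⋀_{1≤k≤p} η_{i_k} (x_k) : p ≥ 1, x ∈ x₁ ⊕ ⋯ ⊕ xₚ }`. -/
noncomputable def famSum {ι : Type*} (η : ι → R → unitInterval) (x : R) : unitInterval :=
  sSup {t | ∃ l : List (ι × R), l ≠ [] ∧ x ∈ hsumList (l.map Prod.snd) ∧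
    t = ⨅ p ∈ l, η p.1 p.2}

end Semihyperring

/-!
Representations `x ∈ y₁z₁ ⊕ ⋯ ⊕ yₚzₚ` can be concatenated: by associativity of `⊕`, if `x` and
`y` have representations then every `z ∈ x ⊕ y` has their concatenation as a representation,
which gives `(λμ)(z) ≥ min ((λμ)(x), (λμ)(y))`. By distributivity, multiplying a representation
of `x` on the right by `y` gives the representation `xy ∈ y₁(z₁y) ⊕ ⋯ ⊕ yₚ(zₚy)`, and
`μ (zᵢy) ≥ μ zᵢ`; symmetrically on the left with `λ`.
-/

namespace Semihyperring

variable {R : Type*} [Semihyperring R]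

theorem haddSet_singleton_left (x : R) (S : Set R) :
    haddSet {x} S = ⋃ b ∈ S, hadd x b := by
  simp [haddSet]

theorem mem_hsumList_append {l₁ l₂ : List R} {x y z : R} (hx : x ∈ hsumList l₁)
    (hy : y ∈ hsumList l₂) (hz : z ∈ hadd x y) : z ∈ hsumList (l₁ ++ l₂) := by
  induction l₁ generalizing x z with
  | nil =>
    rw [hsumList, Set.mem_singleton_iff] at hx
    subst hx
    rw [zero_hadd, Set.mem_singleton_iff] at hz
    rwa [List.nil_append, hz]
  | cons a l ih =>
    rw [hsumList, haddSet_singleton_left, Set.mem_iUnion₂] at hx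
    obtain ⟨b, hb, hx⟩ := hx
    have hz' : z ∈ ⋃ w ∈ hadd b y, hadd a w := by
      rw [hadd_assoc, Set.mem_iUnion₂]
      exact ⟨x, hx, hz⟩
    obtain ⟨w, hw, hzw⟩ := Set.mem_iUnion₂.mp hz'
    rw [List.cons_append, hsumList, haddSet_singleton_left, Set.mem_iUnion₂]
    exact ⟨w, ih hb hw, hzw⟩

theorem image_hsumList {f : R → R} (hf₀ : f zero = zero)
    (hf : ∀ x y, f '' hadd x y = hadd (f x) (f y)) (l : List R) :
    f '' hsumList l = hsumList (l.map f) := by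
  induction l with
  | nil => simp [hsumList, hf₀]
  | cons a l ih =>
    simp only [hsumList, List.map_cons, haddSet_singleton_left, Set.image_iUnion₂, hf,
      ← ih, Set.biUnion_image]

theorem le_fprod (lam mu : R → unitInterval) {l : List (R × R)} {x : R} (hl : l ≠ [])
    (hx : x ∈ hsumList (l.map fun p => mul p.1 p.2)) :
    (⨅ p ∈ l, lam p.1 ⊓ mu p.2) ≤ fprod lam mu x :=
  le_sSup ⟨l, hl, hx, rfl⟩

theorem fprod_inf_fprod_le (lam mu : R → unitInterval) {x y z : R} (hz : z ∈ hadd x y) :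
    fprod lam mu x ⊓ fprod lam mu y ≤ fprod lam mu z := by
  rw [fprod, fprod, sSup_inf_sSup]
  refine iSup₂_le ?_
  rintro ⟨_, _⟩ ⟨⟨l₁, hl₁, hx, rfl⟩, ⟨l₂, -, hy, rfl⟩⟩
  have hz : z ∈ hsumList ((l₁ ++ l₂).map fun p => mul p.1 p.2) := by
    rw [List.map_append]
    exact mem_hsumList_append hx hy hz
  calc (⨅ p ∈ l₁, lam p.1 ⊓ mu p.2) ⊓ (⨅ p ∈ l₂, lam p.1 ⊓ mu p.2)
      = ⨅ p ∈ l₁ ++ l₂, lam p.1 ⊓ mu p.2 := by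
        simp only [List.mem_append, iInf_or, iInf_inf_eq]
        exact inf_inf_inf_comm _ _ _ _
    _ ≤ fprod lam mu z := le_fprod lam mu (by simp [hl₁]) hz

/-- `f` carries a representation `x ∈ y₁z₁ ⊕ ⋯ ⊕ yₚzₚ` to the representation
`f x ∈ f (y₁z₁) ⊕ ⋯ ⊕ f (yₚzₚ)`, whose pairs are the `g (yᵢ, zᵢ)`. -/
theorem fprod_le_fprod_map {lam mu : R → unitInterval} {f : R → R}
    (hf : ∀ l, f '' hsumList l = hsumList (l.map f)) (g : R × R → R × R)
    (hg : ∀ p, mul (g p).1 (g p).2 = f (mul p.1 p.2))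
    (hle : ∀ p, lam p.1 ⊓ mu p.2 ≤ lam (g p).1 ⊓ mu (g p).2) (x : R) :
    fprod lam mu x ≤ fprod lam mu (f x) := by
  refine sSup_le ?_
  rintro _ ⟨l, hl, hx, rfl⟩
  have hfx : f x ∈ hsumList ((l.map g).map fun p => mul p.1 p.2) := by
    have hmap : (l.map g).map (fun p => mul p.1 p.2) = (l.map fun p => mul p.1 p.2).map f := by
      simp only [List.map_map, Function.comp_def, hg]
    rw [hmap, ← hf]
    exact Set.mem_image_of_mem f hx
  calc ⨅ p ∈ l, lam p.1 ⊓ mu p.2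
      ≤ ⨅ q ∈ l.map g, lam q.1 ⊓ mu q.2 := by
        simp only [List.mem_map, iInf_exists, iInf_and, le_iInf_iff]
        rintro _ p hp rfl
        exact (iInf₂_le p hp).trans (hle p)
    _ ≤ fprod lam mu (f x) := le_fprod lam mu (by simpa using hl) hfx

theorem fprod_le_fprod_mul_right {lam mu : R → unitInterval}
    (hmu : ∀ a b, mu a ≤ mu (mul a b)) (x y : R) :
    fprod lam mu x ≤ fprod lam mu (mul x y) :=
  fprod_le_fprod_map (f := (mul · y)) (image_hsumList (zero_mul y) (right_distrib · · y))
    (fun p => (p.1, mul p.2 y)) (fun p => (mul_assoc p.1 p.2 y).symm)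
    (fun p => inf_le_inf_left _ (hmu p.2 y)) x

theorem fprod_le_fprod_mul_left {lam mu : R → unitInterval}
    (hlam : ∀ a b, lam b ≤ lam (mul a b)) (x y : R) :
    fprod lam mu y ≤ fprod lam mu (mul x y) :=
  fprod_le_fprod_map (f := mul x) (image_hsumList (mul_zero x) (left_distrib x))
    (fun p => (mul x p.1, p.2)) (fun p => mul_assoc x p.1 p.2)
    (fun p => inf_le_inf_right _ (hlam x p.1)) y

end Semihyperring

open Semihyperring in
/-- the product of two fuzzy hyperideals of `R` is a fuzzy hyperideal of `R`. -/
theorem fprod_isFuzzyHyperideal {R : Type*} [Semihyperring R] (lam mu : R → unitInterval)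
    (hlam : IsFuzzyHyperideal lam) (hmu : IsFuzzyHyperideal mu) :
    IsFuzzyHyperideal (fprod lam mu) :=
  ⟨fun _ _ => le_iInf₂ fun _ hz => fprod_inf_fprod_le lam mu hz,
    fun x y => sup_le
      (fprod_le_fprod_mul_right (fun a b => le_sup_left.trans (hmu.2 a b)) x y)
      (fprod_le_fprod_mul_left (fun a b => le_sup_right.trans (hlam.2 a b)) x y)⟩
end

section
/- Let (R, ⊕, ·) be a semihyperring. If λ and μ are fuzzy hyperideals of R, then their sum λ ⊕ μ is a fuzzy hyperideal of R. -/
/-!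
Bounding `(λ ⊕ μ)(x) ⊓ (λ ⊕ μ)(y)` means bounding `(λ y₁ ⊓ μ z₁) ⊓ (λ y₂ ⊓ μ z₂)` for
`x ∈ y₁ ⊕ z₁`, `y ∈ y₂ ⊕ z₂`; associativity and commutativity of `⊕` put any `z ∈ x ⊕ y`
into `u ⊕ v` with `u ∈ y₁ ⊕ y₂`, `v ∈ z₁ ⊕ z₂`, where `λ u ⊓ μ v` dominates that term.
For products, distributivity sends a decomposition `x ∈ y₁ ⊕ z₁` to
`x·y ∈ y₁y ⊕ z₁y` (and similarly on the left), and `λ`, `μ` only grow under multiplication.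
-/

namespace Semihyperring

variable {R : Type*} [Semihyperring R]

theorem exists_mem_hadd_hadd_comm {x y z y₁ z₁ y₂ z₂ : R}
    (hz : z ∈ hadd x y) (hx : x ∈ hadd y₁ z₁) (hy : y ∈ hadd y₂ z₂) :
    ∃ u ∈ hadd y₁ y₂, ∃ v ∈ hadd z₁ z₂, z ∈ hadd u v := by
  -- `z ∈ (x ⊕ y₂) ⊕ z₂`, `x ⊕ y₂ = y₂ ⊕ (y₁ ⊕ z₁) = (y₂ ⊕ y₁) ⊕ z₁`, then `(u ⊕ z₁) ⊕ z₂ = u ⊕ (z₁ ⊕ z₂)`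
  have h₁ : z ∈ ⋃ w ∈ hadd x y₂, hadd w z₂ := by
    rw [← hadd_assoc]
    exact Set.mem_iUnion₂.2 ⟨y, hy, hz⟩
  obtain ⟨w₁, hw₁, hzw₁⟩ := Set.mem_iUnion₂.1 h₁
  have h₂ : w₁ ∈ ⋃ w ∈ hadd y₂ y₁, hadd w z₁ := by
    rw [← hadd_assoc]
    exact Set.mem_iUnion₂.2 ⟨x, hx, hadd_comm x y₂ ▸ hw₁⟩
  obtain ⟨u, hu, hw₁u⟩ := Set.mem_iUnion₂.1 h₂
  have h₃ : z ∈ ⋃ w ∈ hadd z₁ z₂, hadd u w := by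
    rw [hadd_assoc]
    exact Set.mem_iUnion₂.2 ⟨w₁, hw₁u, hzw₁⟩
  obtain ⟨v, hv, hzv⟩ := Set.mem_iUnion₂.1 h₃
  exact ⟨u, hadd_comm y₂ y₁ ▸ hu, v, hv, hzv⟩

theorem mul_mem_hadd_mul_right {x a b : R} (y : R) (hx : x ∈ hadd a b) :
    mul x y ∈ hadd (mul a y) (mul b y) :=
  right_distrib a b y ▸ ⟨x, hx, rfl⟩

theorem mul_mem_hadd_mul_left {y a b : R} (x : R) (hy : y ∈ hadd a b) :
    mul x y ∈ hadd (mul x a) (mul x b) :=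
  left_distrib x a b ▸ ⟨y, hy, rfl⟩

section fsum

variable {lam mu : R → unitInterval}

theorem inf_le_fsum {x y z : R} (h : x ∈ hadd y z) : lam y ⊓ mu z ≤ fsum lam mu x :=
  le_sSup ⟨y, z, h, rfl⟩

theorem fsum_le {x : R} {t : unitInterval}
    (h : ∀ y z, x ∈ hadd y z → lam y ⊓ mu z ≤ t) : fsum lam mu x ≤ t :=
  sSup_le fun _ ⟨y, z, hx, ht⟩ => ht ▸ h y z hx

theorem fsum_inf_fsum_le_of_mem_hadd
    (hlam : ∀ x y : R, lam x ⊓ lam y ≤ ⨅ z ∈ hadd x y, lam z)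
    (hmu : ∀ x y : R, mu x ⊓ mu y ≤ ⨅ z ∈ hadd x y, mu z)
    {x y z : R} (hz : z ∈ hadd x y) :
    fsum lam mu x ⊓ fsum lam mu y ≤ fsum lam mu z := by
  rw [fsum, fsum, sSup_inf_sSup]
  refine iSup₂_le ?_
  rintro ⟨-, -⟩ ⟨⟨y₁, z₁, hx, rfl⟩, ⟨y₂, z₂, hy, rfl⟩⟩
  obtain ⟨u, hu, v, hv, hzuv⟩ := exists_mem_hadd_hadd_comm hz hx hy
  calc (lam y₁ ⊓ mu z₁) ⊓ (lam y₂ ⊓ mu z₂)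
      = (lam y₁ ⊓ lam y₂) ⊓ (mu z₁ ⊓ mu z₂) := inf_inf_inf_comm _ _ _ _
    _ ≤ lam u ⊓ mu v :=
        inf_le_inf ((hlam y₁ y₂).trans (biInf_le lam hu)) ((hmu z₁ z₂).trans (biInf_le mu hv))
    _ ≤ fsum lam mu z := inf_le_fsum hzuv

theorem fsum_le_fsum_apply {f : R → R} (hf : ∀ x y z, x ∈ hadd y z → f x ∈ hadd (f y) (f z))
    (hlam : ∀ x, lam x ≤ lam (f x)) (hmu : ∀ x, mu x ≤ mu (f x)) (x : R) :
    fsum lam mu x ≤ fsum lam mu (f x) :=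
  fsum_le fun y z hx => (inf_le_inf (hlam y) (hmu z)).trans (inf_le_fsum (hf x y z hx))

end fsum

end Semihyperring

open Semihyperring in
/-- the sum of two fuzzy hyperideals of `R` is a fuzzy hyperideal of `R`. -/
theorem fsum_isFuzzyHyperideal {R : Type*} [Semihyperring R] (lam mu : R → unitInterval)
    (hlam : IsFuzzyHyperideal lam) (hmu : IsFuzzyHyperideal mu) :
    IsFuzzyHyperideal (fsum lam mu) := by
  refine ⟨fun x y => le_iInf₂ fun z hz => fsum_inf_fsum_le_of_mem_hadd hlam.1 hmu.1 hz,
    fun x y => sup_le ?_ ?_⟩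
  · exact fsum_le_fsum_apply (fun _ _ _ => mul_mem_hadd_mul_right y)
      (fun a => le_sup_left.trans (hlam.2 a y)) (fun a => le_sup_left.trans (hmu.2 a y)) x
  · exact fsum_le_fsum_apply (fun _ _ _ => mul_mem_hadd_mul_left x)
      (fun a => le_sup_right.trans (hlam.2 x a)) (fun a => le_sup_right.trans (hmu.2 x a)) y
end

section
/- Let (R, ⊕, ·) be a semihyperring. Then R is regular if and only if for every right hyperideal I of R and every left hyperideal L of R, IL = I ∩ L, where IL = {x ∈ R : x ∈ a₁b₁ ⊕ ⋯ ⊕ aₚbₚ for some p ≥ 1, aᵢ ∈ I, bᵢ ∈ L}. -/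
/-!
If `x = x a x`, then `x` is the one-term hypersum `(x a) x` with `x a ∈ I` and `x ∈ L`, while
every hypersum of products `aᵢ bᵢ` stays in `I ∩ L` because both are closed under `⊕`.
Conversely, let `I` and `L` consist of the hypersums of elements of `{x} ∪ xR` and of
`{x} ∪ Rx`. Distributivity turns `x ∈ IL` into `x ∈ ⟨x², xRx⟩`, the hypersums of elements of
`{x²} ∪ xRx`; multiplying on the left by `x` gives `x² ∈ ⟨xRx⟩`, hence `x ∈ ⟨xRx⟩`. Finally
`xRx` is itself closed under `⊕`, since `x a x ⊕ x b x = x (a ⊕ b) x`, so `x ∈ xRx`.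
-/

namespace Semihyperring

open Set

variable {R : Type*} [Semihyperring R]

def HaddClosed (T : Set R) : Prop :=
  ∀ x ∈ T, ∀ y ∈ T, hadd x y ⊆ T

def hsumClosure (G : Set R) : Set R :=
  {y | ∃ l : List R, l ≠ [] ∧ (∀ t ∈ l, t ∈ G) ∧ y ∈ hsumList l}

@[simp]
lemma mem_haddSet {A B : Set R} {x : R} :
    x ∈ haddSet A B ↔ ∃ a ∈ A, ∃ b ∈ B, x ∈ hadd a b := by
  simp [haddSet]

lemma haddSet_singleton_zero (B : Set R) : haddSet {zero} B = B := by
  ext; simp [zero_hadd]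

lemma haddSet_assoc (A B C : Set R) :
    haddSet (haddSet A B) C = haddSet A (haddSet B C) := by
  ext t
  have assoc (a b c : R) :
      (∃ w ∈ hadd a b, t ∈ hadd w c) ↔ ∃ w ∈ hadd b c, t ∈ hadd a w := by
    simpa using (Set.ext_iff.1 (hadd_assoc a b c) t).symm
  simp only [mem_haddSet]
  constructor
  · rintro ⟨w, ⟨a, ha, b, hb, hw⟩, c, hc, ht⟩
    obtain ⟨v, hv, htv⟩ := (assoc a b c).1 ⟨w, hw, ht⟩
    exact ⟨a, ha, v, ⟨b, hb, c, hc, hv⟩, htv⟩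
  · rintro ⟨a, ha, v, ⟨b, hb, c, hc, hv⟩, ht⟩
    obtain ⟨w, hw, htw⟩ := (assoc a b c).2 ⟨v, hv, ht⟩
    exact ⟨w, ⟨a, ha, b, hb, hw⟩, c, hc, htw⟩

@[simp]
lemma hsumList_singleton (x : R) : hsumList [x] = {x} := by
  ext; simp [hsumList, hadd_zero]

lemma hsumList_append (l l' : List R) :
    hsumList (l ++ l') = haddSet (hsumList l) (hsumList l') := by
  induction l with
  | nil => exact (haddSet_singleton_zero _).symm
  | cons x xs ih =>
    change haddSet {x} (hsumList (xs ++ l')) = haddSet (haddSet {x} (hsumList xs)) _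
    rw [ih, haddSet_assoc]

lemma HaddClosed.hsumList_subset {T : Set R} (hT : HaddClosed T) :
    ∀ {l : List R}, l ≠ [] → (∀ t ∈ l, t ∈ T) → hsumList l ⊆ T
  | [x], _, hl => by simpa using hl
  | x :: y :: ys, _, hl => by
    intro t ht
    obtain ⟨_, rfl, b, hb, ht⟩ := mem_haddSet.1 ht
    rw [List.forall_mem_cons] at hl
    exact hT _ hl.1 b (hsumList_subset hT (List.cons_ne_nil y ys) hl.2 hb) ht

lemma subset_hsumClosure (G : Set R) : G ⊆ hsumClosure G :=
  fun g hg => ⟨[g], List.cons_ne_nil g [], by simpa using hg, by simp⟩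

lemma haddClosed_hsumClosure (G : Set R) : HaddClosed (hsumClosure G) := by
  rintro a ⟨l, hl, hlG, ha⟩ b ⟨l', -, hlG', hb⟩ t ht
  refine ⟨l ++ l', by simp [hl], ?_, ?_⟩
  · simpa only [List.mem_append, or_imp, forall_and] using ⟨hlG, hlG'⟩
  · rw [hsumList_append]
    exact mem_haddSet.2 ⟨a, ha, b, hb, ht⟩

lemma hsumClosure_subset {G T : Set R} (hT : HaddClosed T) (hGT : G ⊆ T) :
    hsumClosure G ⊆ T := by
  rintro y ⟨l, hl, hlG, hy⟩
  exact hT.hsumList_subset hl (fun t ht => hGT (hlG t ht)) hy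

lemma hsumClosure_mono {G H : Set R} (h : G ⊆ H) : hsumClosure G ⊆ hsumClosure H :=
  hsumClosure_subset (haddClosed_hsumClosure H) (h.trans (subset_hsumClosure H))

lemma haddClosed_univ : HaddClosed (univ : Set R) :=
  fun _ _ _ _ => subset_univ _

lemma HaddClosed.image_mul_left {T : Set R} (hT : HaddClosed T) (r : R) :
    HaddClosed (mul r '' T) := by
  rintro _ ⟨a, ha, rfl⟩ _ ⟨b, hb, rfl⟩
  rw [← left_distrib]
  exact image_mono (hT a ha b hb)

lemma HaddClosed.image_mul_right {T : Set R} (hT : HaddClosed T) (r : R) :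
    HaddClosed ((mul · r) '' T) := by
  rintro _ ⟨a, ha, rfl⟩ _ ⟨b, hb, rfl⟩
  rw [← right_distrib]
  exact image_mono (hT a ha b hb)

lemma HaddClosed.preimage_mul_left {T : Set R} (hT : HaddClosed T) (r : R) :
    HaddClosed (mul r ⁻¹' T) := by
  intro a ha b hb
  rw [← image_subset_iff, left_distrib]
  exact hT _ ha _ hb

lemma HaddClosed.preimage_mul_right {T : Set R} (hT : HaddClosed T) (r : R) :
    HaddClosed ((mul · r) ⁻¹' T) := by
  intro a ha b hb
  rw [← image_subset_iff, right_distrib]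
  exact hT _ ha _ hb

lemma image_mul_left_hsumClosure_subset (r : R) (G : Set R) :
    mul r '' hsumClosure G ⊆ hsumClosure (mul r '' G) :=
  image_subset_iff.2 <| hsumClosure_subset ((haddClosed_hsumClosure _).preimage_mul_left r)
    (image_subset_iff.1 (subset_hsumClosure _))

lemma image_mul_right_hsumClosure_subset (r : R) (G : Set R) :
    (mul · r) '' hsumClosure G ⊆ hsumClosure ((mul · r) '' G) :=
  image_subset_iff.2 <| hsumClosure_subset ((haddClosed_hsumClosure _).preimage_mul_right r)
    (image_subset_iff.1 (subset_hsumClosure _))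

lemma mul_mem_hsumClosure_image2 {A B : Set R} {a b : R} (ha : a ∈ hsumClosure A)
    (hb : b ∈ hsumClosure B) : mul a b ∈ hsumClosure (image2 mul A B) := by
  have hA : A ⊆ (mul · b) ⁻¹' hsumClosure (image2 mul A B) := fun a' ha' =>
    hsumClosure_mono (image_subset_image2_right ha')
      (image_mul_left_hsumClosure_subset a' B (mem_image_of_mem _ hb))
  exact hsumClosure_subset ((haddClosed_hsumClosure _).preimage_mul_right b) hA ha

lemma setProd_subset_hsumClosure (A B : Set R) :
    setProd A B ⊆ hsumClosure (image2 mul A B) := by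
  rintro x ⟨l, hl, hlAB, hx⟩
  refine ⟨l.map fun p => mul p.1 p.2, by simpa using hl, ?_, hx⟩
  simp only [List.mem_map, forall_exists_index, and_imp]
  rintro _ p hp rfl
  exact mem_image2_of_mem (hlAB p hp).1 (hlAB p hp).2

lemma mul_mem_setProd {A B : Set R} {a b : R} (ha : a ∈ A) (hb : b ∈ B) :
    mul a b ∈ setProd A B :=
  ⟨[(a, b)], List.cons_ne_nil _ _, by simpa using ⟨ha, hb⟩, by simp⟩

lemma IsRightHyperideal.setProd_subset {I : Set R} (hI : IsRightHyperideal I) (B : Set R) :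
    setProd I B ⊆ I :=
  (setProd_subset_hsumClosure I B).trans <| hsumClosure_subset hI.2.1 <| by
    rintro _ ⟨a, ha, b, -, rfl⟩
    exact hI.2.2 a ha b

lemma IsLeftHyperideal.setProd_subset {L : Set R} (hL : IsLeftHyperideal L) (A : Set R) :
    setProd A L ⊆ L :=
  (setProd_subset_hsumClosure A L).trans <| hsumClosure_subset hL.2.1 <| by
    rintro _ ⟨a, -, b, hb, rfl⟩
    exact hL.2.2 b hb a

lemma isRightHyperideal_hsumClosure {G : Set R} (hG : G.Nonempty)
    (hGmul : ∀ t ∈ G, ∀ r, mul t r ∈ G) : IsRightHyperideal (hsumClosure G) := by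
  refine ⟨hG.mono (subset_hsumClosure G), haddClosed_hsumClosure G, fun y hy r => ?_⟩
  refine hsumClosure_mono ?_ (image_mul_right_hsumClosure_subset r G (mem_image_of_mem _ hy))
  rintro _ ⟨t, ht, rfl⟩
  exact hGmul t ht r

lemma isLeftHyperideal_hsumClosure {G : Set R} (hG : G.Nonempty)
    (hGmul : ∀ t ∈ G, ∀ r, mul r t ∈ G) : IsLeftHyperideal (hsumClosure G) := by
  refine ⟨hG.mono (subset_hsumClosure G), haddClosed_hsumClosure G, fun y hy r => ?_⟩
  refine hsumClosure_mono ?_ (image_mul_left_hsumClosure_subset r G (mem_image_of_mem _ hy))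
  rintro _ ⟨t, ht, rfl⟩
  exact hGmul t ht r

lemma setProd_hsumClosure_subset (A B : Set R) :
    setProd (hsumClosure A) (hsumClosure B) ⊆ hsumClosure (image2 mul A B) :=
  (setProd_subset_hsumClosure _ _).trans <| hsumClosure_subset (haddClosed_hsumClosure _) <| by
    rintro _ ⟨a, ha, b, hb, rfl⟩
    exact mul_mem_hsumClosure_image2 ha hb

lemma isRightHyperideal_hsumClosure_insert_range (x : R) :
    IsRightHyperideal (hsumClosure (insert x (range (mul x)))) :=
  isRightHyperideal_hsumClosure (insert_nonempty _ _) <| by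
    rintro _ (rfl | ⟨r, rfl⟩) s
    exacts [Or.inr ⟨s, rfl⟩, Or.inr ⟨mul r s, (Semihyperring.mul_assoc x r s).symm⟩]

lemma isLeftHyperideal_hsumClosure_insert_range (x : R) :
    IsLeftHyperideal (hsumClosure (insert x (range (mul · x)))) :=
  isLeftHyperideal_hsumClosure (insert_nonempty _ _) <| by
    rintro _ (rfl | ⟨r, rfl⟩) s
    exacts [Or.inr ⟨s, rfl⟩, Or.inr ⟨mul s r, Semihyperring.mul_assoc s r x⟩]

lemma haddClosed_range_mul_mul (x y : R) : HaddClosed (range fun c => mul (mul x c) y) := by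
  have h := (haddClosed_univ.image_mul_left x).image_mul_right y
  rwa [image_univ, ← range_comp] at h

lemma image2_mul_insert_range_subset (x : R) :
    image2 mul (insert x (range (mul x))) (insert x (range (mul · x))) ⊆
      insert (mul x x) (range fun c => mul (mul x c) x) := by
  rintro _ ⟨_, (rfl | ⟨r, rfl⟩), _, (rfl | ⟨s, rfl⟩), rfl⟩
  · exact mem_insert _ _
  · exact Or.inr ⟨s, Semihyperring.mul_assoc _ _ _⟩
  · exact Or.inr ⟨r, rfl⟩
  · refine Or.inr ⟨mul r s, ?_⟩
    simp only [Semihyperring.mul_assoc]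

lemma mul_self_mem_hsumClosure_of_mem {x : R}
    (hx : x ∈ hsumClosure (insert (mul x x) (range fun c => mul (mul x c) x))) :
    mul x x ∈ hsumClosure (range fun c => mul (mul x c) x) := by
  refine hsumClosure_mono ?_ (image_mul_left_hsumClosure_subset x _ (mem_image_of_mem _ hx))
  rintro _ ⟨_, (rfl | ⟨c, rfl⟩), rfl⟩
  · exact ⟨x, Semihyperring.mul_assoc _ _ _⟩
  · exact ⟨mul x c, by simp only [Semihyperring.mul_assoc]⟩

lemma exists_eq_mul_mul_of_mem_setProd {x : R}
    (hx : x ∈ setProd (hsumClosure (insert x (range (mul x))))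
      (hsumClosure (insert x (range (mul · x))))) :
    ∃ a, x = mul (mul x a) x := by
  set P := range fun c => mul (mul x c) x
  have hxP' : x ∈ hsumClosure (insert (mul x x) P) :=
    hsumClosure_mono (image2_mul_insert_range_subset x) (setProd_hsumClosure_subset _ _ hx)
  have hxP : x ∈ hsumClosure P := hsumClosure_subset (haddClosed_hsumClosure P)
    (insert_subset (mul_self_mem_hsumClosure_of_mem hxP') (subset_hsumClosure P)) hxP'
  obtain ⟨a, ha⟩ := hsumClosure_subset (haddClosed_range_mul_mul x x) subset_rfl hxP
  exact ⟨a, ha.symm⟩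

end Semihyperring

open Semihyperring in
/-- `R` is regular iff `IL = I ∩ L` for every right hyperideal `I` and every
left hyperideal `L` of `R`. -/
theorem regular_iff_setProd_eq_inter (R : Type*) [Semihyperring R] :
    Regular R ↔ ∀ I L : Set R, IsRightHyperideal I → IsLeftHyperideal L →
      setProd I L = I ∩ L := by
  refine ⟨fun hreg I L hI hL => ?_, fun h x => ?_⟩
  · refine (Set.subset_inter (hI.setProd_subset L) (hL.setProd_subset I)).antisymm ?_
    rintro x ⟨hxI, hxL⟩
    obtain ⟨a, ha⟩ := hreg x
    have hmem := mul_mem_setProd (hI.2.2 x hxI a) hxL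
    rwa [← ha] at hmem
  · apply exists_eq_mul_mul_of_mem_setProd
    rw [h _ _ (isRightHyperideal_hsumClosure_insert_range x)
      (isLeftHyperideal_hsumClosure_insert_range x)]
    exact ⟨subset_hsumClosure _ (Set.mem_insert x _), subset_hsumClosure _ (Set.mem_insert x _)⟩
end

section
/- Let (R, ⊕, ·) be a fully idempotent semihyperring and η a fuzzy hyperideal of R. If η is a fuzzy prime hyperideal, then η is a fuzzy irreducible hyperideal. -/
/-!
For fuzzy hyperideals `λ, μ` the product `λμ` lies below `λ ⊓ μ`: every summand `yᵢzᵢ` has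
`λ`-value at least `λ yᵢ` and `μ`-value at least `μ zᵢ`, and a fuzzy hyperideal is bounded below
on a hypersum by the minimum of its values on the summands. So if `η = λ ⊓ μ` then `λμ ≤ η`, and
primeness gives `λ ≤ η` or `μ ≤ η`, that is `λ = η` or `μ = η`.
-/

namespace Semihyperring

variable {R : Type*} [Semihyperring R]

theorem inf_apply_zero_le_of_mem_hsumList {μ : R → unitInterval}
    (hμ : ∀ a b : R, μ a ⊓ μ b ≤ ⨅ z ∈ hadd a b, μ z) {l : List R} {x : R}
    (hx : x ∈ hsumList l) : (⨅ w ∈ l, μ w) ⊓ μ zero ≤ μ x := by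
  induction l generalizing x with
  | nil =>
    rw [hsumList, Set.mem_singleton_iff] at hx
    exact hx ▸ inf_le_right
  | cons a l ih =>
    simp only [hsumList, haddSet, Set.mem_iUnion, Set.mem_singleton_iff, exists_prop] at hx
    obtain ⟨a', ha', b, hb, hx⟩ := hx
    rw [ha'] at hx
    have hb_le : (⨅ w ∈ l, μ w) ⊓ μ zero ≤ μ b := ih hb
    calc (⨅ w ∈ a :: l, μ w) ⊓ μ zero
        ≤ μ a ⊓ ((⨅ w ∈ l, μ w) ⊓ μ zero) :=
          le_inf (inf_le_left.trans (biInf_le μ List.mem_cons_self))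
            (inf_le_inf_right _ (le_iInf₂ fun w hw => biInf_le μ (List.mem_cons_of_mem a hw)))
      _ ≤ μ a ⊓ μ b := inf_le_inf_left _ hb_le
      _ ≤ μ x := (hμ a b).trans (biInf_le μ hx)

namespace IsFuzzyHyperideal

variable {μ : R → unitInterval}

theorem apply_le_apply_zero (hμ : IsFuzzyHyperideal μ) (y : R) : μ y ≤ μ zero := by
  simpa only [Semihyperring.mul_zero] using le_sup_left.trans (hμ.2 y zero)

theorem iInf_le_of_mem_hsumList (hμ : IsFuzzyHyperideal μ) {l : List R} (hl : l ≠ [])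
    {x : R} (hx : x ∈ hsumList l) : ⨅ w ∈ l, μ w ≤ μ x := by
  obtain ⟨w, hw⟩ := List.exists_mem_of_ne_nil l hl
  have hzero : ⨅ w ∈ l, μ w ≤ μ zero := (biInf_le μ hw).trans (hμ.apply_le_apply_zero w)
  simpa only [inf_eq_left.2 hzero] using inf_apply_zero_le_of_mem_hsumList hμ.1 hx

end IsFuzzyHyperideal

theorem fprod_le_of_forall_le {lam mu ν : R → unitInterval} (hν : IsFuzzyHyperideal ν)
    (h : ∀ y z : R, lam y ⊓ mu z ≤ ν (mul y z)) : fprod lam mu ≤ ν := by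
  intro x
  refine sSup_le ?_
  rintro t ⟨l, hl, hx, rfl⟩
  refine le_trans ?_ (hν.iInf_le_of_mem_hsumList (mt List.map_eq_nil_iff.1 hl) hx)
  refine le_iInf₂ fun w hw => ?_
  obtain ⟨p, hp, rfl⟩ := List.mem_map.1 hw
  exact (biInf_le (fun p : R × R => lam p.1 ⊓ mu p.2) hp).trans (h p.1 p.2)

theorem fprod_le_inf {lam mu : R → unitInterval} (hlam : IsFuzzyHyperideal lam)
    (hmu : IsFuzzyHyperideal mu) : fprod lam mu ≤ lam ⊓ mu :=
  le_inf (fprod_le_of_forall_le hlam fun y z => inf_le_left.trans (le_sup_left.trans (hlam.2 y z)))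
    (fprod_le_of_forall_le hmu fun y z => inf_le_right.trans (le_sup_right.trans (hmu.2 y z)))

theorem IsFuzzyPrimeHyperideal.isFuzzyIrreducibleHyperideal {η : R → unitInterval}
    (hη : IsFuzzyPrimeHyperideal η) : IsFuzzyIrreducibleHyperideal η := by
  refine ⟨hη.1, fun lam mu hlam hmu hinf => ?_⟩
  subst hinf
  rcases hη.2 lam mu hlam hmu (fprod_le_inf hlam hmu) with hle | hle
  · exact Or.inl (le_antisymm hle inf_le_left)
  · exact Or.inr (le_antisymm hle inf_le_right)

end Semihyperring

open Semihyperring in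
theorem fuzzyPrime_is_fuzzyIrreducible_general {R : Type*} [Semihyperring R]
    (eta : R → unitInterval) (hp : IsFuzzyPrimeHyperideal eta) :
    IsFuzzyIrreducibleHyperideal eta :=
  hp.isFuzzyIrreducibleHyperideal

open Semihyperring in
/-- in a fully idempotent semihyperring, every fuzzy prime hyperideal is a
fuzzy irreducible hyperideal. -/
theorem fuzzyPrime_is_fuzzyIrreducible {R : Type*} [Semihyperring R]
    (h : FullyIdempotent R) (eta : R → unitInterval) (heta : IsFuzzyHyperideal eta)
    (hp : IsFuzzyPrimeHyperideal eta) :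
    IsFuzzyIrreducibleHyperideal eta :=
  fuzzyPrime_is_fuzzyIrreducible_general eta hp
end
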